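/- arXiv:math/0008087 — 4 statements merged into one kernel-verified Lean document; each statement's English description precedes it below -/
import Mathlib

section
/- Let n ≥ 1 and m ≥ 1 be integers and let λ₁, …, λ_{m+1} be real numbers with 0 < λ₁ ≤ λ₂ ≤ … ≤ λ_m < λ_{m+1}. Write S = ∑_{i=1}^m λ_i and Q = ∑_{i=1}^m λ_i². If D := (1 + 2/n)² S² − m (1 + 4/n) Q ≥ 0 and λ_{m+1} ≤ (1/m)[(1 + 2/n) S + D^{1/2}], then λ_{m+1} ≤ (1 + 4/n) (1/m) ∑_{i=1}^m λ_i (Yang's second inequality). -/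
/-!
By Cauchy–Schwarz, `S² ≤ m Q`, so the discriminant `(1 + 2/n)² S² − m (1 + 4/n) Q` is at most
`(1 + 2/n)² S² − (1 + 4/n) S² = (2S/n)²`. Since the `λᵢ` are positive, `S ≥ 0`, so the square root
of the discriminant is at most `2S/n`; hence the larger root is at most `((1 + 2/n) S + 2S/n)/m = (1 + 4/n) S/m`.
-/

open Finset

lemma sum_Icc_nonneg_of_le_succ {f : ℕ → ℝ} {m : ℕ} (h₁ : 0 ≤ f 1)
    (hmono : ∀ i, 1 ≤ i → i < m → f i ≤ f (i + 1)) : 0 ≤ ∑ i ∈ Icc 1 m, f i := by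
  have hf : MonotoneOn f (Set.Icc 1 m) :=
    monotoneOn_of_le_add_one Set.ordConnected_Icc fun i _ hi hi' ↦ hmono i hi.1 (by grind)
  refine sum_nonneg fun i hi ↦ h₁.trans ?_
  rw [mem_Icc] at hi
  exact hf ⟨le_rfl, hi.1.trans hi.2⟩ hi hi.1

lemma sqrt_discrim_le_of_sq_le_mul {a S Q c : ℝ} (ha : 0 ≤ a) (hS : 0 ≤ S) (hCS : S ^ 2 ≤ c * Q) :
    √((1 + a) ^ 2 * S ^ 2 - c * (1 + 2 * a) * Q) ≤ a * S := by
  have hdiscrim : (1 + a) ^ 2 * S ^ 2 - c * (1 + 2 * a) * Q ≤ (a * S) ^ 2 := by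
    nlinarith [mul_le_mul_of_nonneg_left hCS (by linarith : 0 ≤ 1 + 2 * a)]
  calc √((1 + a) ^ 2 * S ^ 2 - c * (1 + 2 * a) * Q) ≤ √((a * S) ^ 2) := Real.sqrt_le_sqrt hdiscrim
    _ = a * S := Real.sqrt_sq (by positivity)

theorem yang_explicit_implies_yang_second_general
    (n m : ℕ) (lam : ℕ → ℝ)
    (hpos : 0 < lam 1)
    (hmono : ∀ i, 1 ≤ i → i < m → lam i ≤ lam (i + 1))
    (hbound : lam (m + 1) ≤ (1 / (m : ℝ)) *
      ((1 + 2 / (n : ℝ)) * (∑ i ∈ Finset.Icc 1 m, lam i) +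
        Real.sqrt ((1 + 2 / (n : ℝ)) ^ 2 * (∑ i ∈ Finset.Icc 1 m, lam i) ^ 2 -
          (m : ℝ) * (1 + 4 / (n : ℝ)) * ∑ i ∈ Finset.Icc 1 m, (lam i) ^ 2))) :
    lam (m + 1) ≤ (1 + 4 / (n : ℝ)) * (1 / (m : ℝ)) * ∑ i ∈ Finset.Icc 1 m, lam i := by
  set S := ∑ i ∈ Icc 1 m, lam i
  have hS : 0 ≤ S := sum_Icc_nonneg_of_le_succ hpos.le hmono
  have hCS : S ^ 2 ≤ m * ∑ i ∈ Icc 1 m, lam i ^ 2 := by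
    simpa using sq_sum_le_card_mul_sum_sq (s := Icc 1 m) (f := lam)
  have hsqrt := sqrt_discrim_le_of_sq_le_mul (a := 2 / n) (by positivity) hS hCS
  rw [show 1 + 2 * (2 / (n : ℝ)) = 1 + 4 / n by ring] at hsqrt
  calc lam (m + 1) ≤ (1 / m) * ((1 + 2 / n) * S + √((1 + 2 / n) ^ 2 * S ^ 2 -
          m * (1 + 4 / n) * ∑ i ∈ Icc 1 m, lam i ^ 2)) := hbound
    _ ≤ (1 / m) * ((1 + 2 / n) * S + 2 / n * S) := by gcongr
    _ = (1 + 4 / n) * (1 / m) * S := by ring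

/-- Yang's explicit first-inequality bound (the larger root of the quadratic)
implies Yang's second inequality. -/
theorem yang_explicit_implies_yang_second
    (n m : ℕ) (hn : 1 ≤ n) (hm : 1 ≤ m) (lam : ℕ → ℝ)
    (hpos : 0 < lam 1)
    (hmono : ∀ i, 1 ≤ i → i < m → lam i ≤ lam (i + 1))
    (hlt : lam m < lam (m + 1))
    (hD : (1 + 2 / (n : ℝ)) ^ 2 * (∑ i ∈ Finset.Icc 1 m, lam i) ^ 2 -
        (m : ℝ) * (1 + 4 / (n : ℝ)) * ∑ i ∈ Finset.Icc 1 m, (lam i) ^ 2 ≥ 0)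
    (hbound : lam (m + 1) ≤ (1 / (m : ℝ)) *
      ((1 + 2 / (n : ℝ)) * (∑ i ∈ Finset.Icc 1 m, lam i) +
        Real.sqrt ((1 + 2 / (n : ℝ)) ^ 2 * (∑ i ∈ Finset.Icc 1 m, lam i) ^ 2 -
          (m : ℝ) * (1 + 4 / (n : ℝ)) * ∑ i ∈ Finset.Icc 1 m, (lam i) ^ 2))) :
    lam (m + 1) ≤ (1 + 4 / (n : ℝ)) * (1 / (m : ℝ)) * ∑ i ∈ Finset.Icc 1 m, lam i :=
  yang_explicit_implies_yang_second_general n m lam hpos hmono hbound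
end

section
/- Let n ≥ 1 and m ≥ 1 be integers and let λ₁, …, λ_{m+1} be real numbers with 0 < λ₁ ≤ λ₂ ≤ … ≤ λ_m < λ_{m+1}. If Yang's second inequality holds, i.e. λ_{m+1} ≤ (1 + 4/n) (1/m) ∑_{i=1}^m λ_i, then the Hile–Protter inequality holds: ∑_{i=1}^m λ_i/(λ_{m+1} − λ_i) ≥ m n / 4. -/
/-- Yang's second inequality implies the Hile–Protter inequality. -/
theorem yang_second_implies_hile_protter
    (n m : ℕ) (hn : 1 ≤ n) (hm : 1 ≤ m) (lam : ℕ → ℝ)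
    (hpos : 0 < lam 1)
    (hmono : ∀ i, 1 ≤ i → i < m → lam i ≤ lam (i + 1))
    (hlt : lam m < lam (m + 1))
    (hYang2 : lam (m + 1) ≤ (1 + 4 / (n : ℝ)) * (1 / (m : ℝ)) *
        ∑ i ∈ Finset.Icc 1 m, lam i) :
    ∑ i ∈ Finset.Icc 1 m, lam i / (lam (m + 1) - lam i) ≥ (m : ℝ) * (n : ℝ) / 4 := by
  set Λ := lam (m + 1) with hΛ
  set S := ∑ i ∈ Finset.Icc 1 m, lam i with hS
  set a : ℝ := S / m with ha
  have hm0 : (0 : ℝ) < m := by exact_mod_cast hm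
  have hn0 : (0 : ℝ) < n := by exact_mod_cast hn
  -- monotonicity
  have key : ∀ k, k ≤ m → ∀ j, 1 ≤ j → j ≤ k → lam j ≤ lam k := by
    intro k hk
    induction k with
    | zero => intro j hj hjk; omega
    | succ k ih =>
      intro j hj hjk
      rcases eq_or_lt_of_le hjk with h | h
      · rw [h]
      · have hjk' : j ≤ k := by omega
        have h1 : lam j ≤ lam k := ih (by omega) j hj hjk'
        have h2 : lam k ≤ lam (k + 1) := hmono k (by omega) (by omega)
        linarith
  have hbounds : ∀ i ∈ Finset.Icc 1 m, 0 < lam i ∧ lam i ≤ lam m := by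
    intro i hi
    rw [Finset.mem_Icc] at hi
    have h1 : lam 1 ≤ lam i := key i hi.2 1 le_rfl hi.1
    have h2 : lam i ≤ lam m := key m le_rfl i hi.1 hi.2
    exact ⟨lt_of_lt_of_le hpos h1, h2⟩
  have hΛpos : 0 < Λ := by
    have := (hbounds m (Finset.mem_Icc.mpr ⟨hm, le_rfl⟩)).1
    linarith
  -- bounds on S and a
  have hSlb : (m : ℝ) * lam 1 ≤ S := by
    rw [hS]
    calc (m : ℝ) * lam 1 = ∑ _i ∈ Finset.Icc 1 m, lam 1 := by
          rw [Finset.sum_const, Nat.card_Icc]; simp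
      _ ≤ ∑ i ∈ Finset.Icc 1 m, lam i := by
          apply Finset.sum_le_sum
          intro i hi
          rw [Finset.mem_Icc] at hi
          exact key i hi.2 1 le_rfl hi.1
  have hSub : S ≤ (m : ℝ) * lam m := by
    rw [hS]
    calc ∑ i ∈ Finset.Icc 1 m, lam i ≤ ∑ _i ∈ Finset.Icc 1 m, lam m := by
          apply Finset.sum_le_sum
          intro i hi
          exact (hbounds i hi).2
      _ = (m : ℝ) * lam m := by rw [Finset.sum_const, Nat.card_Icc]; simp
  have hapos : 0 < a := by
    rw [ha]
    apply div_pos _ hm0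
    nlinarith
  have haΛ : a < Λ := by
    rw [ha, div_lt_iff₀ hm0]
    nlinarith
  have haΛ' : (0:ℝ) < Λ - a := by linarith
  -- tangent line estimate
  have htangent : ∀ i ∈ Finset.Icc 1 m,
      a / (Λ - a) + Λ / (Λ - a) ^ 2 * (lam i - a) ≤ lam i / (Λ - lam i) := by
    intro i hi
    obtain ⟨hipos, hile⟩ := hbounds i hi
    have hiΛ : (0:ℝ) < Λ - lam i := by linarith
    rw [← sub_nonneg]
    have heq : lam i / (Λ - lam i) - (a / (Λ - a) + Λ / (Λ - a) ^ 2 * (lam i - a)) =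
        Λ * (lam i - a) ^ 2 / ((Λ - lam i) * (Λ - a) ^ 2) := by
      field_simp
      ring
    rw [heq]
    positivity
  have hsum : (m : ℝ) * (a / (Λ - a)) ≤ ∑ i ∈ Finset.Icc 1 m, lam i / (Λ - lam i) := by
    calc (m : ℝ) * (a / (Λ - a))
        = ∑ i ∈ Finset.Icc 1 m, (a / (Λ - a) + Λ / (Λ - a) ^ 2 * (lam i - a)) := by
          rw [Finset.sum_add_distrib, Finset.sum_const, Nat.card_Icc, ← Finset.mul_sum,
            Finset.sum_sub_distrib, Finset.sum_const, Nat.card_Icc]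
          simp only [Nat.add_sub_cancel, nsmul_eq_mul]
          have : S - (m : ℝ) * a = 0 := by
            rw [ha]; field_simp; ring
          rw [← hS, this, mul_zero, add_zero]
      _ ≤ ∑ i ∈ Finset.Icc 1 m, lam i / (Λ - lam i) := Finset.sum_le_sum htangent
  -- Yang 2 gives a/(Λ-a) ≥ n/4
  have hYa : Λ ≤ (1 + 4 / (n : ℝ)) * a := by
    rw [ha]
    calc Λ ≤ (1 + 4 / (n : ℝ)) * (1 / (m : ℝ)) * S := hYang2
      _ = (1 + 4 / (n : ℝ)) * (S / m) := by ring
  have hfinal : (n : ℝ) / 4 ≤ a / (Λ - a) := by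
    rw [le_div_iff₀ haΛ']
    have h4 : Λ - a ≤ 4 / (n : ℝ) * a := by nlinarith
    calc (n : ℝ) / 4 * (Λ - a) ≤ (n : ℝ) / 4 * (4 / (n : ℝ) * a) := by
          apply mul_le_mul_of_nonneg_left h4 (by positivity)
      _ = a := by field_simp
  calc ∑ i ∈ Finset.Icc 1 m, lam i / (Λ - lam i)
      ≥ (m : ℝ) * (a / (Λ - a)) := hsum
    _ ≥ (m : ℝ) * ((n : ℝ) / 4) := by
        apply mul_le_mul_of_nonneg_left hfinal (le_of_lt hm0)
    _ = (m : ℝ) * (n : ℝ) / 4 := by ring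
end

section
/- Let n ≥ 1 and let Ω ⊆ ℝⁿ be a Lebesgue measurable set of finite positive measure, and let Ω★ be the open ball centered at the origin with the same Lebesgue measure as Ω. Let g : [0,∞) → ℝ be a nonnegative nondecreasing function such that x ↦ g(|x|) is integrable on Ω and on Ω★. Then ∫_Ω g(|x|) dx ≥ ∫_{Ω★} g(|x|) dx. -/
open MeasureTheory

/-- A nonnegative nondecreasing radial function integrates to less over the
spherical rearrangement `Ω★` (the origin-centered ball of the same volume)
than over `Ω` itself. -/
theorem integral_radial_monotone_ge_ball
    (n : ℕ) (hn : 1 ≤ n) (Ω : Set (EuclideanSpace ℝ (Fin n)))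
    (hΩmeas : MeasurableSet Ω)
    (hΩpos : 0 < volume Ω) (hΩfin : volume Ω < ⊤)
    (R : ℝ) (hR : 0 < R)
    (hvol : volume (Metric.ball (0 : EuclideanSpace ℝ (Fin n)) R) = volume Ω)
    (g : ℝ → ℝ)
    (hgnonneg : ∀ r, 0 ≤ r → 0 ≤ g r)
    (hgmono : MonotoneOn g (Set.Ici (0 : ℝ)))
    (hgint : IntegrableOn (fun x => g ‖x‖) Ω volume)
    (hgint' : IntegrableOn (fun x => g ‖x‖)
        (Metric.ball (0 : EuclideanSpace ℝ (Fin n)) R) volume) :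
    ∫ x in Ω, g ‖x‖ ≥
      ∫ x in Metric.ball (0 : EuclideanSpace ℝ (Fin n)) R, g ‖x‖ := by
  set B := Metric.ball (0 : EuclideanSpace ℝ (Fin n)) R with hB
  have hBmeas : MeasurableSet B := measurableSet_ball
  -- decompose both integrals
  have hΩsplit : Ω = (Ω ∩ B) ∪ (Ω \ B) := (Set.inter_union_diff Ω B).symm
  have hBsplit : B = (Ω ∩ B) ∪ (B \ Ω) := by
    rw [Set.inter_comm]; exact (Set.inter_union_diff B Ω).symm
  have hA1meas : MeasurableSet (Ω \ B) := hΩmeas.diff hBmeas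
  have hA2meas : MeasurableSet (B \ Ω) := hBmeas.diff hΩmeas
  have hCmeas : MeasurableSet (Ω ∩ B) := hΩmeas.inter hBmeas
  have hfin1 : volume (Ω \ B) < ⊤ := lt_of_le_of_lt (measure_mono Set.diff_subset) hΩfin
  have hfin2 : volume (B \ Ω) < ⊤ :=
    lt_of_le_of_lt (measure_mono Set.diff_subset) (hvol ▸ hΩfin)
  have hfinC : volume (Ω ∩ B) < ⊤ :=
    lt_of_le_of_lt (measure_mono Set.inter_subset_left) hΩfin
  -- equal measures of the symmetric pieces
  have hmeq : volume (Ω \ B) = volume (B \ Ω) := by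
    have h1 : volume (Ω ∩ B) + volume (Ω \ B) = volume Ω := measure_inter_add_diff Ω hBmeas
    have h2 : volume (B ∩ Ω) + volume (B \ Ω) = volume B := measure_inter_add_diff B hΩmeas
    rw [Set.inter_comm] at h2
    have := h1.trans (hvol ▸ h2.symm)
    exact (ENNReal.add_right_inj hfinC.ne).1 this
  have hintC : IntegrableOn (fun x => g ‖x‖) (Ω ∩ B) volume :=
    hgint.mono_set Set.inter_subset_left
  have hint1 : IntegrableOn (fun x => g ‖x‖) (Ω \ B) volume :=
    hgint.mono_set Set.diff_subset
  have hint2 : IntegrableOn (fun x => g ‖x‖) (B \ Ω) volume :=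
    hgint'.mono_set Set.diff_subset
  have hsplitΩ : ∫ x in Ω, g ‖x‖ = (∫ x in Ω ∩ B, g ‖x‖) + ∫ x in Ω \ B, g ‖x‖ := by
    rw [← setIntegral_union (Set.disjoint_left.2 fun a ha hb => hb.2 ha.2) hA1meas hintC hint1, ← hΩsplit]
  have hsplitB : ∫ x in B, g ‖x‖ = (∫ x in Ω ∩ B, g ‖x‖) + ∫ x in B \ Ω, g ‖x‖ := by
    rw [← setIntegral_union (Set.disjoint_left.2 fun a ha hb => hb.2 ha.1) hA2meas hintC hint2, ← hBsplit]
  rw [ge_iff_le, hsplitΩ, hsplitB]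
  gcongr _ + ?_
  -- ∫_{B\Ω} g‖x‖ ≤ gR * μ = ∫_{Ω\B} gR ≤ ∫_{Ω\B} g‖x‖
  have hRmem : (R : ℝ) ∈ Set.Ici (0 : ℝ) := le_of_lt hR
  have hle2 : ∫ x in B \ Ω, g ‖x‖ ≤ (volume (B \ Ω)).toReal * g R := by
    rw [← smul_eq_mul, ← measureReal_def, ← setIntegral_const]
    apply setIntegral_mono_on hint2 (integrableOn_const hfin2.ne) hA2meas
    intro x hx
    have hxB : x ∈ B := hx.1
    have : ‖x‖ < R := mem_ball_zero_iff.1 hxB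
    exact hgmono (norm_nonneg x) hRmem this.le
  have hle1 : (volume (Ω \ B)).toReal * g R ≤ ∫ x in Ω \ B, g ‖x‖ := by
    rw [← smul_eq_mul, ← measureReal_def, ← setIntegral_const]
    apply setIntegral_mono_on (integrableOn_const hfin1.ne) hint1 hA1meas
    intro x hx
    have hxB : x ∉ B := hx.2
    have : R ≤ ‖x‖ := le_of_not_gt fun h => hxB (mem_ball_zero_iff.2 h)
    exact hgmono hRmem (norm_nonneg x) this
  calc ∫ x in B \ Ω, g ‖x‖ ≤ (volume (B \ Ω)).toReal * g R := hle2
    _ = (volume (Ω \ B)).toReal * g R := by rw [hmeq]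
    _ ≤ ∫ x in Ω \ B, g ‖x‖ := hle1
end

section
/- Let n ≥ 1 be an integer, let μ > 0 and R > 0 be real numbers, and let g : (0,R) → ℝ be twice differentiable and satisfy the radial eigenvalue equation g''(r) + ((n−1)/r) g'(r) − ((n−1)/r²) g(r) + μ g(r) = 0 for all r ∈ (0,R). Define B(r) = g'(r)² + (n−1) g(r)²/r². Then for every r ∈ (0,R), B'(r) = −2 [ μ g(r) g'(r) + (n−1)(r g'(r) − g(r))²/r³ ]; in particular, if g(r) > 0 and g'(r) > 0 then B'(r) < 0. -/
/-- If `g` solves the radial eigenvalue equation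
`g'' + ((n-1)/r) g' - ((n-1)/r²) g + μ g = 0` on `(0,R)`, then the quantity
`B(r) = g'(r)² + (n-1) g(r)²/r²` has derivative
`B'(r) = -2 [μ g g' + (n-1)(r g' - g)²/r³]`; in particular `B' < 0` wherever
`g > 0` and `g' > 0`. -/
theorem radial_B_derivative
    (n : ℕ) (hn : 1 ≤ n) (μ R : ℝ) (hμ : 0 < μ) (hR : 0 < R)
    (g g' g'' : ℝ → ℝ)
    (hg' : ∀ r ∈ Set.Ioo (0 : ℝ) R, HasDerivAt g (g' r) r)
    (hg'' : ∀ r ∈ Set.Ioo (0 : ℝ) R, HasDerivAt g' (g'' r) r)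
    (hode : ∀ r ∈ Set.Ioo (0 : ℝ) R,
      g'' r + (((n : ℝ) - 1) / r) * g' r - (((n : ℝ) - 1) / r ^ 2) * g r
        + μ * g r = 0) :
    ∀ r ∈ Set.Ioo (0 : ℝ) R,
      HasDerivAt (fun ρ => (g' ρ) ^ 2 + ((n : ℝ) - 1) * (g ρ) ^ 2 / ρ ^ 2)
        (-2 * (μ * g r * g' r +
          ((n : ℝ) - 1) * (r * g' r - g r) ^ 2 / r ^ 3)) r ∧
      (0 < g r → 0 < g' r →
        -2 * (μ * g r * g' r +
          ((n : ℝ) - 1) * (r * g' r - g r) ^ 2 / r ^ 3) < 0) := by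
  intro r hr
  have hr0 : 0 < r := hr.1
  have hrne : r ≠ 0 := hr0.ne'
  have h1 := hg' r hr
  have h2 := hg'' r hr
  have hode' := hode r hr
  have hN : (0:ℝ) ≤ (n:ℝ) - 1 := by
    have : (1:ℝ) ≤ (n:ℝ) := by exact_mod_cast hn
    linarith
  constructor
  · have hnum : HasDerivAt (fun ρ => ((n:ℝ) - 1) * (g ρ) ^ 2)
        (((n:ℝ) - 1) * (2 * g r ^ 1 * g' r)) r := (h1.pow 2).const_mul _
    have hden : HasDerivAt (fun ρ : ℝ => ρ ^ 2) (2 * r ^ 1) r := hasDerivAt_pow 2 r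
    have hdiv := hnum.div hden (by positivity)
    have hsq : HasDerivAt (fun ρ => (g' ρ) ^ 2) (2 * g' r ^ 1 * g'' r) r := h2.pow 2
    have hgpp : g'' r = -((((n : ℝ) - 1) / r) * g' r) + (((n : ℝ) - 1) / r ^ 2) * g r
        - μ * g r := by linarith
    convert hsq.add hdiv using 1
    case e'_4 => rfl
    case e'_5 => rfl
    case e'_8 => rfl
    rw [hgpp]
    field_simp
    ring
  · intro hg0 hg'0
    have h1 : 0 < μ * g r * g' r := by positivity
    have h2 : 0 ≤ ((n : ℝ) - 1) * (r * g' r - g r) ^ 2 / r ^ 3 := by positivity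
    nlinarith
end
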